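/- Let G be a finite directed multigraph with d^+(v) = d^-(v) ≥ 1 for every v, and suppose there is a vertex v0 and edges (a 'red' in-tree) assigning to each v ≠ v0 one out-edge, forming an in-arborescence toward v0. Consider any walk starting at v0 that at each vertex v leaves along an unused out-edge, preferring non-tree edges and using the tree edge of v only when all other out-edges of v are used, and never repeating an edge. Then this walk can only terminate at v0, and when it terminates at v0 it has used every edge of G. -/

import Mathlib

/-!
Counting along a trail from `v0` to `u`, every vertex other than its ends is left as often as it
is entered. If the walk is stuck at `u ≠ v0`, all out-edges of `u` are used while `u` was entered
once more than left, contradicting `d⁺(u) = d⁻(u)`; so the trail is closed and its used in- and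
out-edges balance at every vertex. If an edge is unused, its tail has an unused out-edge, hence has
not yet taken its red edge; the head of that red edge then has an unused in-edge and therefore an
unused out-edge. Following the red in-tree down to `v0` yields an unused out-edge at `v0`, which
contradicts maximality.
-/

/-- A walk in a directed multigraph given by `tail`/`head` maps, as a list of edges. -/
def IsWalk {V E : Type} (tail head : E → V) : List E → V → V → Prop
  | [], a, b => a = b
  | e :: es, a, b => tail e = a ∧ IsWalk tail head es (head e) b

/-- A trail: a walk using no edge twice. -/
def IsTrail {V E : Type} (tail head : E → V) (l : List E) (a b : V) : Prop :=
  IsWalk tail head l a b ∧ l.Nodup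

/-- Out-degree of a vertex. -/
noncomputable def outDeg {V E : Type} (tail : E → V) (v : V) : ℕ := Nat.card {e // tail e = v}

/-- In-degree of a vertex. -/
noncomputable def inDeg {V E : Type} (head : E → V) (v : V) : ℕ := Nat.card {e // head e = v}

/-- Adjacency in the underlying undirected graph. -/
def weakAdj {V E : Type} (tail head : E → V) (u v : V) : Prop :=
  ∃ e, (tail e = u ∧ head e = v) ∨ (tail e = v ∧ head e = u)

/-- Directed adjacency. -/
def dirAdj {V E : Type} (tail head : E → V) (u v : V) : Prop :=
  ∃ e, tail e = u ∧ head e = v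

namespace List.Nodup

variable {E : Type} [Fintype E] {l : List E} (p : E → Prop) [DecidablePred p]

lemma countP_le_natCard (hl : l.Nodup) : l.countP (p ·) ≤ Nat.card {e // p e} := by
  classical
  rw [← hl.card_eq_countP, Nat.card_eq_fintype_card, Fintype.card_subtype]
  exact Finset.card_le_card fun e => by simp +contextual

lemma countP_lt_natCard_iff (hl : l.Nodup) :
    l.countP (p ·) < Nat.card {e // p e} ↔ ∃ e, p e ∧ e ∉ l := by
  classical
  rw [← hl.card_eq_countP, Nat.card_eq_fintype_card, Fintype.card_subtype]
  constructor
  · intro hlt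
    obtain ⟨e, he, hel⟩ := Finset.exists_mem_notMem_of_card_lt_card hlt
    simp only [Finset.mem_filter, Finset.mem_univ, true_and, List.mem_toFinset, not_and] at he hel
    exact ⟨e, he, fun h => hel h he⟩
  · rintro ⟨e, he, hel⟩
    have hsub : l.toFinset.filter p ⊆ Finset.univ.filter p := fun e => by simp +contextual
    exact Finset.card_lt_card ((Finset.ssubset_iff_of_subset hsub).2 ⟨e, by simpa, by simp [hel]⟩)

end List.Nodup

lemma Relation.ReflTransGen.of_forall_imp {α : Type*} {r : α → α → Prop} {P : α → Prop}
    (hP : ∀ a b, r a b → P a → P b) {a b : α} (h : Relation.ReflTransGen r a b) (ha : P a) :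
    P b := by
  induction h with
  | refl => exact ha
  | tail _ hbc ih => exact hP _ _ hbc ih

section Walks

variable {V E : Type} [DecidableEq V] {tail head : E → V}

lemma IsWalk.countP_tail_add_eq {l : List E} {a b : V} (hw : IsWalk tail head l a b) (v : V) :
    l.countP (tail · = v) + (if v = b then 1 else 0)
      = l.countP (head · = v) + (if v = a then 1 else 0) := by
  induction l generalizing a with
  | nil => simp [show a = b from hw]
  | cons e es ih =>
    obtain ⟨rfl, hw⟩ := hw
    have := ih hw
    simp only [List.countP_cons]
    by_cases h1 : tail e = v <;> by_cases h2 : head e = v <;> simp_all [eq_comm] <;> omega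

lemma IsWalk.countP_tail_eq_countP_head {l : List E} {a : V} (hw : IsWalk tail head l a a)
    (v : V) : l.countP (tail · = v) = l.countP (head · = v) := by
  simpa using hw.countP_tail_add_eq v

variable [Fintype E]

lemma IsTrail.eq_of_forall_tail_mem {l : List E} {a b : V} (ht : IsTrail tail head l a b)
    (hb : outDeg tail b = inDeg head b) (hused : ∀ e, tail e = b → e ∈ l) : b = a := by
  by_contra hne
  have hcount := ht.1.countP_tail_add_eq b
  rw [if_pos rfl, if_neg hne] at hcount
  have hout : l.countP (tail · = b) = outDeg tail b :=
    (ht.2.countP_le_natCard _).antisymm <| not_lt.1 fun hlt => by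
      obtain ⟨e, he, hel⟩ := (ht.2.countP_lt_natCard_iff _).1 hlt
      exact hel (hused e he)
  have hin : l.countP (head · = b) ≤ inDeg head b := ht.2.countP_le_natCard _
  omega

lemma IsTrail.exists_tail_eq_notMem {l : List E} {a : V} (ht : IsTrail tail head l a a) {e : E}
    (hbal : outDeg tail (head e) = inDeg head (head e)) (he : e ∉ l) :
    ∃ f, tail f = head e ∧ f ∉ l := by
  have hin : l.countP (head · = head e) < inDeg head (head e) :=
    (ht.2.countP_lt_natCard_iff _).2 ⟨e, rfl, he⟩
  rw [← hbal, ← ht.1.countP_tail_eq_countP_head] at hin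
  exact (ht.2.countP_lt_natCard_iff _).1 hin

end Walks

lemma mem_of_tail_eq_of_red_mem {V E : Type} {tail : E → V} {red : Set E} {l : List E}
    (hgreedy : ∀ (l₁ : List E) (e : E) (l₂ : List E), l = l₁ ++ e :: l₂ → e ∈ red →
      ∀ e', tail e' = tail e → e' ≠ e → e' ∈ l₁)
    {e e' : E} (he : e ∈ red) (hel : e ∈ l) (htail : tail e' = tail e) : e' ∈ l := by
  obtain ⟨l₁, l₂, rfl⟩ := List.append_of_mem hel
  by_cases hee : e' = e
  · exact hee ▸ hel
  · exact List.mem_append_left _ (hgreedy l₁ e l₂ rfl he e' htail hee)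

theorem stmt9_general {V E : Type} [Fintype E] (tail head : E → V) (v0 : V)
    (hbal : ∀ v, outDeg tail v = inDeg head v)
    (red : Set E)
    (hredreach : ∀ v : V,
      Relation.ReflTransGen (fun x y => ∃ e ∈ red, tail e = x ∧ head e = y) v v0)
    (l : List E) (u : V) (hT : IsTrail tail head l v0 u)
    (hgreedy : ∀ (l₁ : List E) (e : E) (l₂ : List E), l = l₁ ++ e :: l₂ → e ∈ red →
      ∀ e', tail e' = tail e → e' ≠ e → e' ∈ l₁)
    (hmax : ∀ e, tail e = u → e ∈ l) :
    u = v0 ∧ ∀ e, e ∈ l := by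
  classical
  obtain rfl : u = v0 := hT.eq_of_forall_tail_mem (hbal u) hmax
  refine ⟨rfl, fun e => by_contra fun he => ?_⟩
  have hstep : ∀ a b, (∃ f ∈ red, tail f = a ∧ head f = b) →
      (∃ f, tail f = a ∧ f ∉ l) → ∃ f, tail f = b ∧ f ∉ l := by
    rintro _ _ ⟨f, hf, rfl, rfl⟩ ⟨g, hg, hgl⟩
    exact hT.exists_tail_eq_notMem (hbal _)
      fun hfl => hgl (mem_of_tail_eq_of_red_mem hgreedy hf hfl hg)
  obtain ⟨f, hf, hfl⟩ := (hredreach (tail e)).of_forall_imp hstep ⟨e, rfl, he⟩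
  exact hfl (hmax f hf)

theorem stmt9 {V E : Type} [Fintype V] [Fintype E] (tail head : E → V) (v0 : V)
    (hbal : ∀ v, outDeg tail v = inDeg head v)
    (hpos : ∀ v, 1 ≤ outDeg tail v)
    (red : Set E)
    (hred1 : ∀ v, v ≠ v0 → Nat.card {e // e ∈ red ∧ tail e = v} = 1)
    (hred0 : Nat.card {e // e ∈ red ∧ tail e = v0} = 0)
    (hredreach : ∀ v : V,
      Relation.ReflTransGen (fun x y => ∃ e ∈ red, tail e = x ∧ head e = y) v v0)
    (l : List E) (u : V) (hT : IsTrail tail head l v0 u)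
    (hgreedy : ∀ (l₁ : List E) (e : E) (l₂ : List E), l = l₁ ++ e :: l₂ → e ∈ red →
      ∀ e', tail e' = tail e → e' ≠ e → e' ∈ l₁)
    (hmax : ∀ e, tail e = u → e ∈ l) :
    u = v0 ∧ ∀ e, e ∈ l :=
  stmt9_general tail head v0 hbal red hredreach l u hT hgreedy hmax
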